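/- arXiv:2212.09111 — 6 statements merged into one kernel-verified Lean document; each statement's English description precedes it below -/
import Mathlib

section
/- Let D, E be elements of a (possibly noncommutative) ring with unit I, and let W be a left module element (row vector) and V a right module element (column vector). Suppose D·E − q·E·D = D + E, W·(α·E − γ·D) = W, and (β·D − δ·E)·V = V, where q = θ₁/θ₂, α = (1−θ₁)a/θ₂, β = (1−θ₂)b/(θ₂(1−b−d)), γ = (1−θ₂)c/θ₂, δ = (1−θ₁)d/(θ₂(1−b−d)). Define D↑ = ((1−θ₂)/θ₂)·D, E↑ = ((1−θ₁)/θ₂)·E, D→ = D↑ + I, E→ = E↑ − I. Then these satisfy: θ₂·D↑·E↑ − θ₁·E↑·D↑ = (1−θ₂)·E↑ + (1−θ₁)·D↑; W·(a·E↑ − c·D↑) = W; and (b·D↑ − d·E↑)·V = (1−b−d)·V. -/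
open MulOpposite

/-! With `D↑ = ((1 - θ₂)/θ₂) • D` and `E↑ = ((1 - θ₁)/θ₂) • E` each relation is a rescaling of
the corresponding DEHP relation: the bulk relation is `(1 - θ₁)(1 - θ₂)/θ₂` times
`D E - q E D = D + E`, the left boundary relation is the DEHP one verbatim, and the right
boundary relation is `1 - b - d` times the DEHP one. -/

section Rescaling

variable {K R : Type*} [Field K] [Ring R] [Algebra K R]

theorem smul_mul_smul_sub_smul_mul_smul {θ₁ θ₂ : K} (hθ₂ : θ₂ ≠ 0) (x y : K) (D E : R) :
    θ₂ • ((x • D) * (y • E)) - θ₁ • ((y • E) * (x • D))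
      = (θ₂ * x * y) • (D * E - (θ₁ / θ₂) • (E * D)) := by
  rw [smul_mul_smul_comm, smul_mul_smul_comm]
  match_scalars <;> field_simp

theorem bulk_relation_rescaled {θ₁ θ₂ : K} (hθ₂ : θ₂ ≠ 0) {D E : R}
    (hbulk : D * E - (θ₁ / θ₂) • (E * D) = D + E) :
    θ₂ • ((((1 - θ₂) / θ₂) • D) * (((1 - θ₁) / θ₂) • E))
        - θ₁ • ((((1 - θ₁) / θ₂) • E) * (((1 - θ₂) / θ₂) • D))
      = (1 - θ₂) • (((1 - θ₁) / θ₂) • E) + (1 - θ₁) • (((1 - θ₂) / θ₂) • D) := by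
  rw [smul_mul_smul_sub_smul_mul_smul hθ₂, hbulk]
  match_scalars <;> field_simp

theorem left_boundary_rescaled {N : Type*} [AddCommGroup N] [Module Rᵐᵒᵖ N]
    {θ₁ θ₂ a c : K} {D E : R} {W : N}
    (hleft : op (((1 - θ₁) * a / θ₂) • E - ((1 - θ₂) * c / θ₂) • D) • W = W) :
    op (a • (((1 - θ₁) / θ₂) • E) - c • (((1 - θ₂) / θ₂) • D)) • W = W := by
  have hrescale : a • (((1 - θ₁) / θ₂) • E) - c • (((1 - θ₂) / θ₂) • D)
      = ((1 - θ₁) * a / θ₂) • E - ((1 - θ₂) * c / θ₂) • D := by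
    match_scalars <;> ring
  rw [hrescale, hleft]

theorem right_boundary_rescaled {M : Type*} [AddCommGroup M] [Module R M]
    {θ₁ θ₂ b d : K} (hbd : 1 - b - d ≠ 0) {D E : R} {V : M}
    (hright : (((1 - θ₂) * b / (θ₂ * (1 - b - d))) • D
        - ((1 - θ₁) * d / (θ₂ * (1 - b - d))) • E) • V = V) :
    (b • (((1 - θ₂) / θ₂) • D) - d • (((1 - θ₁) / θ₂) • E)) • V
      = algebraMap K R (1 - b - d) • V := by
  have hfactor : b • (((1 - θ₂) / θ₂) • D) - d • (((1 - θ₁) / θ₂) • E)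
      = algebraMap K R (1 - b - d) * ((((1 - θ₂) * b / (θ₂ * (1 - b - d))) • D
        - ((1 - θ₁) * d / (θ₂ * (1 - b - d))) • E)) := by
    rw [← Algebra.smul_def]
    match_scalars <;> field_simp
  rw [hfactor, mul_smul, hright]

end Rescaling

/-- Theorem 2.7: a solution of the DEHP algebra with the transformed parameters
yields a solution of the reduced compatibility relations for the stochastic
six-vertex model on a strip. -/
theorem stmt0 (R M N : Type*) [Ring R] [Algebra ℝ R]
    [AddCommGroup M] [Module R M] [AddCommGroup N] [Module Rᵐᵒᵖ N]
    (θ₁ θ₂ a b c d : ℝ) (hθ₂ : θ₂ ≠ 0) (hbd : 1 - b - d ≠ 0)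
    (D E : R) (W : N) (V : M)
    (hbulk : D * E - (θ₁ / θ₂) • (E * D) = D + E)
    (hleft : op (((1 - θ₁) * a / θ₂) • E - ((1 - θ₂) * c / θ₂) • D) • W = W)
    (hright : (((1 - θ₂) * b / (θ₂ * (1 - b - d))) • D
        - ((1 - θ₁) * d / (θ₂ * (1 - b - d))) • E) • V = V) :
    (θ₂ • ((((1 - θ₂) / θ₂) • D) * (((1 - θ₁) / θ₂) • E))
        - θ₁ • ((((1 - θ₁) / θ₂) • E) * (((1 - θ₂) / θ₂) • D))
      = (1 - θ₂) • (((1 - θ₁) / θ₂) • E) + (1 - θ₁) • (((1 - θ₂) / θ₂) • D))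
    ∧ op (a • (((1 - θ₁) / θ₂) • E) - c • (((1 - θ₂) / θ₂) • D)) • W = W
    ∧ (b • (((1 - θ₂) / θ₂) • D) - d • (((1 - θ₁) / θ₂) • E)) • V
        = algebraMap ℝ R (1 - b - d) • V :=
  ⟨bulk_relation_rescaled hθ₂ hbulk, left_boundary_rescaled hleft,
    right_boundary_rescaled hbd hright⟩
end

section
/- Let θ₁, θ₂, a, b, c, d be real numbers, and suppose matrices D↑, E↑ and vectors W (row), V (column) satisfy: θ₂·D↑·E↑ − θ₁·E↑·D↑ = (1−θ₂)·E↑ + (1−θ₁)·D↑; W·(a·E↑ − c·D↑) = W; (b·D↑ − d·E↑)·V = (1−b−d)·V. Define D→ = D↑ + I and E→ = E↑ − I. Then the following eight relations hold: (1) D↑·D→ = D→·D↑, (2) E↑·E→ = E→·E↑, (3) D↑·E→ = (1−θ₂)·D→·E↑ + θ₁·E→·D↑, (4) E↑·D→ = θ₂·D→·E↑ + (1−θ₁)·E→·D↑, (5) W·D→ = (1−c)·W·D↑ + a·W·E↑, (6) W·E→ = (1−a)·W·E↑ + c·W·D↑, (7) D↑·V = (1−b)·D→·V + d·E→·V, (8)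 E↑·V = (1−d)·E→·V + b·D→·V. -/
open MulOpposite

/-!
All eight relations are linear consequences of the three hypotheses. For the bulk relations,
expanding `D→ = D↑ + 1` and `E→ = E↑ - 1` leaves exactly `± hbulk`. For the boundary relations,
the coefficients are arranged so that, e.g., `(1 - c) D↑ + a E↑ = D→ + (a E↑ - c D↑) - 1`, and
`W` cannot tell `a E↑ - c D↑` from `1`; similarly `V` cannot tell `b D↑ - d E↑` from `1 - b - d`.
-/

theorem smul_eq_add_sub_smul_of_smul_eq {R M : Type*} [Ring R] [AddCommGroup M] [Module R M]
    {Y Z : R} {v : M} (h : Y • v = Z • v) (A : R) : A • v = (A + Z - Y) • v := by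
  rw [add_sub_assoc, add_smul, sub_smul, h, sub_self, add_zero]

section Bulk

variable {k R : Type*} [CommRing k] [Ring R] [Algebra k R] {θ₁ θ₂ : k} {D E : R}

theorem mul_sub_one_eq_of_bulk (h : θ₂ • (D * E) - θ₁ • (E * D) = (1 - θ₂) • E + (1 - θ₁) • D) :
    D * (E - 1) = (1 - θ₂) • ((D + 1) * E) + θ₁ • ((E - 1) * D) := by
  rw [mul_sub, mul_one, add_mul, one_mul, sub_mul, one_mul, smul_sub, smul_add]
  linear_combination (norm := module) h

theorem mul_add_one_eq_of_bulk (h : θ₂ • (D * E) - θ₁ • (E * D) = (1 - θ₂) • E + (1 - θ₁) • D) :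
    E * (D + 1) = θ₂ • ((D + 1) * E) + (1 - θ₁) • ((E - 1) * D) := by
  rw [mul_add, mul_one, add_mul, one_mul, sub_mul, one_mul, smul_sub, smul_add]
  linear_combination (norm := module) -h

end Bulk

/-- The three simplified relations imply the eight compatibility relations
for local moves of down-right paths in the six-vertex model on a strip,
under the substitution D→ = D↑ + I, E→ = E↑ − I. -/
theorem stmt1 (R M N : Type*) [Ring R] [Algebra ℝ R]
    [AddCommGroup M] [Module R M] [AddCommGroup N] [Module Rᵐᵒᵖ N]
    (θ₁ θ₂ a b c d : ℝ)
    (Du Eu : R) (W : N) (V : M)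
    (hbulk : θ₂ • (Du * Eu) - θ₁ • (Eu * Du) = (1 - θ₂) • Eu + (1 - θ₁) • Du)
    (hleft : op (a • Eu - c • Du) • W = W)
    (hright : (b • Du - d • Eu) • V = algebraMap ℝ R (1 - b - d) • V) :
    (Du * (Du + 1) = (Du + 1) * Du)
    ∧ (Eu * (Eu - 1) = (Eu - 1) * Eu)
    ∧ (Du * (Eu - 1) = (1 - θ₂) • ((Du + 1) * Eu) + θ₁ • ((Eu - 1) * Du))
    ∧ (Eu * (Du + 1) = θ₂ • ((Du + 1) * Eu) + (1 - θ₁) • ((Eu - 1) * Du))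
    ∧ (op (Du + 1) • W = op ((1 - c) • Du) • W + op (a • Eu) • W)
    ∧ (op (Eu - 1) • W = op ((1 - a) • Eu) • W + op (c • Du) • W)
    ∧ (Du • V = ((1 - b) • (Du + 1)) • V + (d • (Eu - 1)) • V)
    ∧ (Eu • V = ((1 - d) • (Eu - 1)) • V + (b • (Du + 1)) • V) := by
  replace hleft : op (a • Eu - c • Du) • W = (1 : Rᵐᵒᵖ) • W :=
    hleft.trans (one_smul _ W).symm
  rw [Algebra.algebraMap_eq_smul_one] at hright
  refine ⟨((Commute.refl Du).add_right (Commute.one_right Du)).eq,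
    ((Commute.refl Eu).sub_right (Commute.one_right Eu)).eq,
    mul_sub_one_eq_of_bulk hbulk, mul_add_one_eq_of_bulk hbulk, ?_, ?_, ?_, ?_⟩
  · rw [← add_smul, smul_eq_add_sub_smul_of_smul_eq hleft.symm]
    congr 1
    simp only [op_add, op_sub, op_smul, op_one]
    module
  · rw [← add_smul, smul_eq_add_sub_smul_of_smul_eq hleft]
    congr 1
    simp only [op_sub, op_smul, op_one]
    module
  · rw [← add_smul, smul_eq_add_sub_smul_of_smul_eq hright]
    congr 1
    module
  · rw [← add_smul, smul_eq_add_sub_smul_of_smul_eq hright.symm]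
    congr 1
    module
end

section
/- Let a, b, c, d, θ₁, θ₂ be real numbers satisfying (1−θ₁)(a+d−ab−ad)(b+c−bc−ab) = (1−θ₂)(a+d−ad−cd)(b+c−bc−cd). Then the scalars D↑ = a+d−ab−ad, E↑ = b+c−bc−cd, D→ = a+d−ad−cd, E→ = b+c−bc−ab, together with W = V = 1, satisfy: D↑·E→ = (1−θ₂)·D→·E↑ + θ₁·E→·D↑; E↑·D→ = θ₂·D→·E↑ + (1−θ₁)·E→·D↑; D→ = (1−c)·D↑ + a·E↑; E→ = (1−a)·E↑ + c·D↑; D↑ = (1−b)·D→ + d·E→; E↑ = (1−d)·E→ + b·D→. -/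
theorem quadratic_relations_of_balance {R : Type*} [CommRing R] {Du Eu Dr Er θ₁ θ₂ : R}
    (h : (1 - θ₁) * Du * Er = (1 - θ₂) * Dr * Eu) :
    Du * Er = (1 - θ₂) * (Dr * Eu) + θ₁ * (Er * Du) ∧
      Eu * Dr = θ₂ * (Dr * Eu) + (1 - θ₁) * (Er * Du) :=
  ⟨by linear_combination h, by linear_combination -h⟩

/-- Scalar (one-dimensional) solution of the compatibility relations giving
the product Bernoulli stationary measure. -/
theorem stmt2 (a b c d θ₁ θ₂ : ℝ)
    (h : (1 - θ₁) * (a + d - a*b - a*d) * (b + c - b*c - a*b)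
        = (1 - θ₂) * (a + d - a*d - c*d) * (b + c - b*c - c*d)) :
    let Du : ℝ := a + d - a*b - a*d
    let Eu : ℝ := b + c - b*c - c*d
    let Dr : ℝ := a + d - a*d - c*d
    let Er : ℝ := b + c - b*c - a*b
    (Du * Er = (1 - θ₂) * (Dr * Eu) + θ₁ * (Er * Du))
    ∧ (Eu * Dr = θ₂ * (Dr * Eu) + (1 - θ₁) * (Er * Du))
    ∧ (Dr = (1 - c) * Du + a * Eu)
    ∧ (Er = (1 - a) * Eu + c * Du)
    ∧ (Du = (1 - b) * Dr + d * Er)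
    ∧ (Eu = (1 - d) * Er + b * Dr) := by
  intro Du Eu Dr Er
  obtain ⟨hDE, hED⟩ := quadratic_relations_of_balance h
  exact ⟨hDE, hED, by ring, by ring, by ring, by ring⟩
end

section
/- Let θ₁, θ₂ ∈ ℝ with (1−θ₁) ≥ 0 and (1−θ₂) ≥ 0. Set D→ = E↑ = √(1−θ₁) and D↑ = E→ = √(1−θ₂). Then with a = b = c = d = 1, these scalars satisfy the compatibility relations: D↑·E→ = (1−θ₂)·D→·E↑ + θ₁·E→·D↑; E↑·D→ = θ₂·D→·E↑ + (1−θ₁)·E→·D↑; D→ = (1−c)·D↑ + a·E↑; E→ = (1−a)·E↑ + c·D↑; D↑ = (1−b)·D→ + d·E→; E↑ = (1−d)·E→ + b·D→. -/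
theorem bulk_relations_of_mul_self {R : Type*} [CommRing R] {s t θ₁ θ₂ : R}
    (hs : s * s = 1 - θ₁) (ht : t * t = 1 - θ₂) :
    t * t = (1 - θ₂) * (s * s) + θ₁ * (t * t) ∧
      s * s = θ₂ * (s * s) + (1 - θ₁) * (t * t) := by
  obtain rfl : θ₁ = 1 - s * s := by rw [hs]; ring
  obtain rfl : θ₂ = 1 - t * t := by rw [ht]; ring
  constructor <;> ring

/-- Scalar solution of the compatibility relations in the anti-reflecting
boundary case a = b = c = d = 1. -/
theorem stmt3 (θ₁ θ₂ : ℝ) (h₁ : 0 ≤ 1 - θ₁) (h₂ : 0 ≤ 1 - θ₂) :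
    let Dr : ℝ := Real.sqrt (1 - θ₁)
    let Eu : ℝ := Real.sqrt (1 - θ₁)
    let Du : ℝ := Real.sqrt (1 - θ₂)
    let Er : ℝ := Real.sqrt (1 - θ₂)
    let a : ℝ := 1
    let b : ℝ := 1
    let c : ℝ := 1
    let d : ℝ := 1
    (Du * Er = (1 - θ₂) * (Dr * Eu) + θ₁ * (Er * Du))
    ∧ (Eu * Dr = θ₂ * (Dr * Eu) + (1 - θ₁) * (Er * Du))
    ∧ (Dr = (1 - c) * Du + a * Eu)
    ∧ (Er = (1 - a) * Eu + c * Du)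
    ∧ (Du = (1 - b) * Dr + d * Er)
    ∧ (Eu = (1 - d) * Er + b * Dr) := by
  intro Dr Eu Du Er a b c d
  obtain ⟨bulk_right, bulk_up⟩ :=
    bulk_relations_of_mul_self (Real.mul_self_sqrt h₁) (Real.mul_self_sqrt h₂)
  exact ⟨bulk_right, bulk_up, by ring, by ring, by ring, by ring⟩
end

section
/- Let r ∈ (0,1), let μ be a finite Borel measure on ℝ supported in (−(1+r)/(2√r), ∞) whose restriction to [−1,1] has a density bounded below by ε·√(1−y²) for some ε > 0, and which has finitely many atoms y₁ > y₂ > … > y_k all lying in (−(1+r)/(2√r), −1). Then lim_{N→∞} [Σⱼ (1+r+2√r·yⱼ)^N·μ({yⱼ})] / [∫_{[−1,1]} (1+r+2√r·y)^N dμ(y)] = 0. -/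
/-! The atoms sit where the weight `1 + r + 2√r y` is below its value `(1 - √r)²` at `y = -1`,
so their total contribution is `O((1 - √r)^(2N))`. On `[0, 1/2]` the weight is at least `1 + r`,
and this interval has positive mass because the density is at least `ε √(3/4)` there; hence the
continuous part is at least a constant times `(1 + r)^N`, and `(1 - √r)² < 1 + r`. -/

open MeasureTheory Filter Real Set

theorem tendsto_div_atTop_zero_of_pow_bounds {A D : ℕ → ℝ} {a b C c : ℝ}
    (hb : 0 ≤ b) (hba : b < a) (hc : 0 < c) (hA0 : ∀ N, 0 ≤ A N)
    (hA : ∀ N, A N ≤ b ^ N * C) (hD : ∀ N, a ^ N * c ≤ D N) :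
    Tendsto (fun N => A N / D N) atTop (nhds 0) := by
  have ha : 0 < a := hb.trans_lt hba
  have hC : 0 ≤ C := by simpa using (hA0 0).trans (hA 0)
  have hDpos : ∀ N, 0 < D N := fun N => (by positivity : 0 < a ^ N * c).trans_le (hD N)
  have hgeom : Tendsto (fun N : ℕ => C / c * (b / a) ^ N) atTop (nhds 0) := by
    simpa using (tendsto_pow_atTop_nhds_zero_of_lt_one (by positivity)
      ((div_lt_one ha).mpr hba)).const_mul (C / c)
  refine squeeze_zero (fun N => div_nonneg (hA0 N) (hDpos N).le) (fun N => ?_) hgeom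
  calc A N / D N ≤ b ^ N * C / (a ^ N * c) :=
        div_le_div₀ (by positivity) (hA N) (by positivity) (hD N)
    _ = C / c * (b / a) ^ N := by rw [div_pow]; field_simp

theorem sum_pow_mul_le_pow_mul_sum {ι : Type*} (s : Finset ι) {w m : ι → ℝ} {b : ℝ}
    (hw0 : ∀ i ∈ s, 0 ≤ w i) (hwb : ∀ i ∈ s, w i ≤ b) (hm : ∀ i ∈ s, 0 ≤ m i) (N : ℕ) :
    ∑ i ∈ s, w i ^ N * m i ≤ b ^ N * ∑ i ∈ s, m i := by
  rw [Finset.mul_sum]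
  exact Finset.sum_le_sum fun i hi =>
    mul_le_mul_of_nonneg_right (pow_le_pow_left₀ (hw0 i hi) (hwb i hi) N) (hm i hi)

theorem ofReal_mul_le_measure_of_restrict_eq_withDensity {α : Type*} [MeasurableSpace α]
    {μ ν : Measure α} {s t : Set α} {f : α → ℝ} {c : ℝ}
    (hdens : μ.restrict s = (ν.restrict s).withDensity (fun x => ENNReal.ofReal (f x)))
    (ht : MeasurableSet t) (hts : t ⊆ s) (hc : ∀ x ∈ t, c ≤ f x) :
    ENNReal.ofReal c * ν t ≤ μ t :=
  calc ENNReal.ofReal c * ν t = ∫⁻ _ in t, ENNReal.ofReal c ∂ν := (setLIntegral_const _ _).symm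
    _ ≤ ∫⁻ x in t, ENNReal.ofReal (f x) ∂ν :=
        setLIntegral_mono' ht fun x hx => ENNReal.ofReal_le_ofReal (hc x hx)
    _ = μ t := by
        rw [← Measure.restrict_eq_self μ hts, hdens, withDensity_apply _ ht,
          Measure.restrict_restrict ht, inter_eq_left.mpr hts]

section Weight

variable {r : ℝ}

theorem weight_pos_of_lt (hr : 0 < r) {x : ℝ} (hx : -(1 + r) / (2 * √r) < x) :
    0 < 1 + r + 2 * √r * x := by
  rw [div_lt_iff₀ (by positivity)] at hx
  linarith

theorem weight_le_of_le_neg_one (hr : 0 ≤ r) {x : ℝ} (hx : x ≤ -1) :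
    1 + r + 2 * √r * x ≤ (1 - √r) ^ 2 := by
  nlinarith [sq_sqrt hr, sqrt_nonneg r]

theorem one_sub_sqrt_sq_lt (hr : 0 < r) : (1 - √r) ^ 2 < 1 + r := by
  nlinarith [sq_sqrt hr.le, sqrt_pos.mpr hr]

theorem pow_mul_measureReal_le_integral_weight (hr : 0 ≤ r) (μ : Measure ℝ) [IsFiniteMeasure μ]
    (N : ℕ) :
    (1 + r) ^ N * μ.real (Icc 0 (1 / 2)) ≤ ∫ x in Icc (-1 : ℝ) 1, (1 + r + 2 * √r * x) ^ N ∂μ := by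
  have hsub : Icc (0 : ℝ) (1 / 2) ⊆ Icc (-1) 1 := Icc_subset_Icc (by norm_num) (by norm_num)
  have hint : IntegrableOn (fun x : ℝ => (1 + r + 2 * √r * x) ^ N) (Icc (-1) 1) μ :=
    (by fun_prop : Continuous _).continuousOn.integrableOn_compact isCompact_Icc
  calc (1 + r) ^ N * μ.real (Icc 0 (1 / 2))
      ≤ ∫ x in Icc (0 : ℝ) (1 / 2), (1 + r + 2 * √r * x) ^ N ∂μ :=
        setIntegral_ge_of_const_le_real measurableSet_Icc (measure_ne_top _ _)
          (fun x hx => pow_le_pow_left₀ (by linarith)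
            (by nlinarith [hx.1, sqrt_nonneg r]) N)
          (hint.mono_set hsub)
    _ ≤ ∫ x in Icc (-1 : ℝ) 1, (1 + r + 2 * √r * x) ^ N ∂μ := by
        refine setIntegral_mono_set hint ?_ (Eventually.of_forall hsub)
        filter_upwards [ae_restrict_mem measurableSet_Icc] with x hx
        have : -1 ≤ x := hx.1
        exact pow_nonneg (by nlinarith [sq_sqrt hr, sqrt_nonneg r, sq_nonneg (1 - √r)]) N

end Weight

theorem measureReal_Icc_zero_half_pos {μ : Measure ℝ} [IsFiniteMeasure μ] {ε : ℝ} (hε : 0 < ε)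
    {f : ℝ → ℝ}
    (hdens : μ.restrict (Icc (-1 : ℝ) 1)
      = (volume.restrict (Icc (-1 : ℝ) 1)).withDensity (fun y => ENNReal.ofReal (f y)))
    (hflb : ∀ y ∈ Icc (-1 : ℝ) 1, ε * √(1 - y ^ 2) ≤ f y) :
    0 < μ.real (Icc 0 (1 / 2)) := by
  have hsub : Icc (0 : ℝ) (1 / 2) ⊆ Icc (-1) 1 := Icc_subset_Icc (by norm_num) (by norm_num)
  have hlow := ofReal_mul_le_measure_of_restrict_eq_withDensity hdens measurableSet_Icc hsub
    (c := ε * √(3 / 4)) fun x hx => le_trans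
      (mul_le_mul_of_nonneg_left (sqrt_le_sqrt (by nlinarith [hx.1, hx.2])) hε.le)
      (hflb x (hsub hx))
  have hpos : 0 < ENNReal.ofReal (ε * √(3 / 4)) * volume (Icc (0 : ℝ) (1 / 2)) := by
    rw [Real.volume_Icc]
    exact ENNReal.mul_pos (by simp only [ne_eq, ENNReal.ofReal_eq_zero, not_le]; positivity)
      (by norm_num)
  exact ENNReal.toReal_pos (hpos.trans_le hlow).ne' (measure_ne_top _ _)

theorem stmt13_general (r : ℝ) (hr : r ∈ Set.Ioo (0 : ℝ) 1)
    (μ : Measure ℝ) [IsFiniteMeasure μ]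
    (ε : ℝ) (hε : 0 < ε) (f : ℝ → ℝ)
    (hdens : μ.restrict (Set.Icc (-1 : ℝ) 1)
      = (volume.restrict (Set.Icc (-1 : ℝ) 1)).withDensity
          (fun y => ENNReal.ofReal (f y)))
    (hflb : ∀ y ∈ Set.Icc (-1 : ℝ) 1, ε * Real.sqrt (1 - y ^ 2) ≤ f y)
    (k : ℕ) (y : Fin k → ℝ)
    (hyloc : ∀ j, y j ∈ Set.Ioo (-(1 + r) / (2 * Real.sqrt r)) (-1 : ℝ)) :
    Tendsto (fun N : ℕ =>
        (∑ j : Fin k, (1 + r + 2 * Real.sqrt r * y j) ^ N * (μ {y j}).toReal)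
          / ∫ x in Set.Icc (-1 : ℝ) 1, (1 + r + 2 * Real.sqrt r * x) ^ N ∂μ)
      atTop (nhds 0) := by
  have hr0 : 0 < r := hr.1
  have hatom_pos j := weight_pos_of_lt hr0 (hyloc j).1
  refine tendsto_div_atTop_zero_of_pow_bounds (sq_nonneg (1 - √r)) (one_sub_sqrt_sq_lt hr0)
    (measureReal_Icc_zero_half_pos hε hdens hflb)
    (fun N => Finset.sum_nonneg fun j _ =>
      mul_nonneg (pow_nonneg (hatom_pos j).le N) ENNReal.toReal_nonneg)
    (sum_pow_mul_le_pow_mul_sum _ (fun j _ => (hatom_pos j).le)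
      (fun j _ => weight_le_of_le_neg_one hr0.le (hyloc j).2.le) fun _ _ => ENNReal.toReal_nonneg)
    (pow_mul_measureReal_le_integral_weight hr0.le μ)

/-- In the maximal current phase, atoms lying in (−(1+r)/(2√r), −1) do not
contribute to the leading asymptotics of the partition function. -/
theorem stmt13 (r : ℝ) (hr : r ∈ Set.Ioo (0 : ℝ) 1)
    (μ : Measure ℝ) [IsFiniteMeasure μ]
    (hsupp : μ (Set.Iic (-(1 + r) / (2 * Real.sqrt r))) = 0)
    (ε : ℝ) (hε : 0 < ε) (f : ℝ → ℝ) (hfm : Measurable f)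
    (hdens : μ.restrict (Set.Icc (-1 : ℝ) 1)
      = (volume.restrict (Set.Icc (-1 : ℝ) 1)).withDensity
          (fun y => ENNReal.ofReal (f y)))
    (hflb : ∀ y ∈ Set.Icc (-1 : ℝ) 1, ε * Real.sqrt (1 - y ^ 2) ≤ f y)
    (k : ℕ) (y : Fin k → ℝ) (hy : StrictAnti y)
    (hyloc : ∀ j, y j ∈ Set.Ioo (-(1 + r) / (2 * Real.sqrt r)) (-1 : ℝ)) :
    Tendsto (fun N : ℕ =>
        (∑ j : Fin k, (1 + r + 2 * Real.sqrt r * y j) ^ N * (μ {y j}).toReal)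
          / ∫ x in Set.Icc (-1 : ℝ) 1, (1 + r + 2 * Real.sqrt r * x) ^ N ∂μ)
      atTop (nhds 0) :=
  stmt13_general r hr μ ε hε f hdens hflb k y hyloc
end

section
/- Let r ∈ (0,1) and let g : [−1,1] → ℝ be continuous, of the form g(y) = √(1−y²)·h(y) with h continuous and h(y) ≥ ε > 0. Then lim_{N→∞} [∫_{−1}^{1}(1+r+2√r·y)^{N−1}·g(y)·dy] / [∫_{−1}^{1}(1+r+2√r·y)^{N}·g(y)·dy] = 1/(1+√r)². -/
/-!
For a finite measure `ν` and a function `0 ≤ f ≤ M` whose values come arbitrarily close to `M` on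
sets of positive measure, the moment ratio `∫ f ^ (N + 1) dν / ∫ f ^ N dν` tends to `M`. It is at
most `M`; conversely, for `0 < t < s < M` the pointwise bound `t f ^ N ≤ f ^ (N + 1) + t ^ (N + 1)`
gives a lower bound `t` up to an error `t ^ (N + 1) ν(univ) / ∫ f ^ N dν`, and Markov's inequality
`∫ f ^ N dν ≥ s ^ N ν {s ≤ f}` makes this error geometrically small.

Here `ν = g(y) dy` on `(-1, 1)`, where `g > 0`, and `f y = 1 + r + 2 √r y` attains its maximum
`(1 + √r)²` at `y = 1`; the theorem follows by taking reciprocals.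
-/

open Filter Topology MeasureTheory Set

lemma mul_pow_le_pow_succ_add_pow_succ {x t : ℝ} (hx : 0 ≤ x) (ht : 0 ≤ t) (N : ℕ) :
    t * x ^ N ≤ x ^ (N + 1) + t ^ (N + 1) := by
  rcases le_total x t with hxt | htx
  · have : t * x ^ N ≤ t ^ (N + 1) := by
      rw [pow_succ']; exact mul_le_mul_of_nonneg_left (pow_le_pow_left₀ hx hxt N) ht
    linarith [pow_nonneg hx (N + 1)]
  · have : t * x ^ N ≤ x ^ (N + 1) := by
      rw [pow_succ']; exact mul_le_mul_of_nonneg_right htx (pow_nonneg hx N)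
    linarith [pow_nonneg ht (N + 1)]

section Moments

variable {α : Type*} [MeasurableSpace α] {μ : Measure α} [IsFiniteMeasure μ] {f : α → ℝ} {M : ℝ}

lemma integrable_pow_of_ae_bound (hf : AEStronglyMeasurable f μ) (hf0 : ∀ᵐ x ∂μ, 0 ≤ f x)
    (hfM : ∀ᵐ x ∂μ, f x ≤ M) (N : ℕ) : Integrable (fun x => f x ^ N) μ :=
  .of_bound (hf.pow N) (M ^ N) <| by
    filter_upwards [hf0, hfM] with x hx0 hxM
    rw [Real.norm_eq_abs, abs_pow, abs_of_nonneg hx0]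
    exact pow_le_pow_left₀ hx0 hxM N

lemma integral_pow_succ_le_mul (hf : AEStronglyMeasurable f μ) (hf0 : ∀ᵐ x ∂μ, 0 ≤ f x)
    (hfM : ∀ᵐ x ∂μ, f x ≤ M) (N : ℕ) :
    ∫ x, f x ^ (N + 1) ∂μ ≤ M * ∫ x, f x ^ N ∂μ := by
  rw [← integral_const_mul]
  refine integral_mono_ae (integrable_pow_of_ae_bound hf hf0 hfM _)
    ((integrable_pow_of_ae_bound hf hf0 hfM N).const_mul M) ?_
  filter_upwards [hf0, hfM] with x hx0 hxM
  rw [pow_succ']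
  exact mul_le_mul_of_nonneg_right hxM (pow_nonneg hx0 N)

lemma mul_integral_pow_le_integral_pow_succ_add (hf : AEStronglyMeasurable f μ)
    (hf0 : ∀ᵐ x ∂μ, 0 ≤ f x) (hfM : ∀ᵐ x ∂μ, f x ≤ M) {t : ℝ} (ht : 0 ≤ t) (N : ℕ) :
    t * ∫ x, f x ^ N ∂μ ≤ ∫ x, f x ^ (N + 1) ∂μ + t ^ (N + 1) * μ.real univ := by
  rw [← integral_const_mul, mul_comm _ (μ.real univ), ← smul_eq_mul, ← integral_const,
    ← integral_add (integrable_pow_of_ae_bound hf hf0 hfM _) (integrable_const _)]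
  refine integral_mono_ae ((integrable_pow_of_ae_bound hf hf0 hfM N).const_mul t)
    ((integrable_pow_of_ae_bound hf hf0 hfM _).add (integrable_const _)) ?_
  filter_upwards [hf0] with x hx0
  exact mul_pow_le_pow_succ_add_pow_succ hx0 ht N

lemma pow_mul_measureReal_le_integral_pow (hf : AEStronglyMeasurable f μ)
    (hf0 : ∀ᵐ x ∂μ, 0 ≤ f x) (hfM : ∀ᵐ x ∂μ, f x ≤ M) {s : ℝ} (hs : 0 ≤ s) (N : ℕ) :
    s ^ N * μ.real {x | s ≤ f x} ≤ ∫ x, f x ^ N ∂μ := by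
  have hsub : {x | s ≤ f x} ⊆ {x | s ^ N ≤ f x ^ N} := fun x hx =>
    pow_le_pow_left₀ hs hx N
  calc s ^ N * μ.real {x | s ≤ f x} ≤ s ^ N * μ.real {x | s ^ N ≤ f x ^ N} :=
        mul_le_mul_of_nonneg_left (measureReal_mono hsub) (pow_nonneg hs N)
    _ ≤ ∫ x, f x ^ N ∂μ := mul_meas_ge_le_integral_of_nonneg
        (by filter_upwards [hf0] with x hx using pow_nonneg hx N)
        (integrable_pow_of_ae_bound hf hf0 hfM N) _

lemma sub_le_integral_pow_succ_div_integral_pow (hf : AEStronglyMeasurable f μ)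
    (hf0 : ∀ᵐ x ∂μ, 0 ≤ f x) (hfM : ∀ᵐ x ∂μ, f x ≤ M) {t s : ℝ} (ht : 0 < t) (hts : t < s)
    (hc : 0 < μ.real {x | s ≤ f x}) (N : ℕ) :
    t - t * (t / s) ^ N * (μ.real univ / μ.real {x | s ≤ f x}) ≤
      (∫ x, f x ^ (N + 1) ∂μ) / ∫ x, f x ^ N ∂μ := by
  set c := μ.real {x | s ≤ f x}
  have hs : 0 < s := ht.trans hts
  have hI := pow_mul_measureReal_le_integral_pow hf hf0 hfM hs.le N
  have hlow := mul_integral_pow_le_integral_pow_succ_add hf hf0 hfM ht.le N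
  have htail : t ^ (N + 1) * μ.real univ ≤
      t * (t / s) ^ N * (μ.real univ / c) * ∫ x, f x ^ N ∂μ :=
    calc t ^ (N + 1) * μ.real univ
        = t * (t / s) ^ N * (μ.real univ / c) * (s ^ N * c) := by
          rw [div_pow]; field_simp; ring
      _ ≤ _ := mul_le_mul_of_nonneg_left hI (by positivity)
  rw [le_div_iff₀ ((mul_pos (pow_pos hs N) hc).trans_le hI)]
  linarith

theorem tendsto_integral_pow_succ_div_integral_pow (hf : AEStronglyMeasurable f μ)
    (hf0 : ∀ᵐ x ∂μ, 0 ≤ f x) (hfM : ∀ᵐ x ∂μ, f x ≤ M) (hM : 0 < M)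
    (hpos : ∀ t < M, μ {x | t < f x} ≠ 0) :
    Tendsto (fun N : ℕ => (∫ x, f x ^ (N + 1) ∂μ) / ∫ x, f x ^ N ∂μ) atTop (𝓝 M) := by
  refine tendsto_order.2 ⟨fun a ha => ?_, fun b hb => .of_forall fun N => ?_⟩
  · obtain ⟨t, hat, htM⟩ := exists_between (max_lt ha hM)
    obtain ⟨s, hts, hsM⟩ := exists_between htM
    have ht : 0 < t := (le_max_right a 0).trans_lt hat
    have hc : 0 < μ.real {x | s ≤ f x} := ENNReal.toReal_pos
      (fun h => hpos s hsM (measure_mono_null (fun x (hx : s < f x) => hx.le) h))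
      (measure_ne_top _ _)
    have hq : Tendsto (fun N : ℕ => (t / s) ^ N) atTop (𝓝 0) :=
      tendsto_pow_atTop_nhds_zero_of_lt_one (div_nonneg ht.le (ht.trans hts).le)
        ((div_lt_one (ht.trans hts)).2 hts)
    have hL : Tendsto (fun N : ℕ => t - t * (t / s) ^ N * (μ.real univ / μ.real {x | s ≤ f x}))
        atTop (𝓝 t) := by
      simpa using ((hq.const_mul t).mul_const _).const_sub t
    filter_upwards [hL.eventually_const_lt ((le_max_left a 0).trans_lt hat)] with N hN
    exact hN.trans_le (sub_le_integral_pow_succ_div_integral_pow hf hf0 hfM ht hts hc N)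
  · refine (div_le_of_le_mul₀ (integral_nonneg_of_ae ?_) hM.le
      (integral_pow_succ_le_mul hf hf0 hfM N)).trans_lt hb
    filter_upwards [hf0] with x hx using pow_nonneg hx N

end Moments

lemma exists_mem_Ioo_lt_of_continuousOn {a b x₀ t : ℝ} {f : ℝ → ℝ} (hab : a < b)
    (hf : ContinuousOn f (Icc a b)) (hx₀ : x₀ ∈ Icc a b) (ht : t < f x₀) :
    ∃ y ∈ Ioo a b, t < f y := by
  have hcl : x₀ ∈ closure (Ioo a b) := (closure_Ioo hab.ne).symm ▸ hx₀
  have := mem_closure_iff_nhdsWithin_neBot.1 hcl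
  have hev : ∀ᶠ y in 𝓝[Ioo a b] x₀, t < f y :=
    ((hf x₀ hx₀).mono Ioo_subset_Icc_self).eventually_const_lt ht
  exact ((eventually_mem_nhdsWithin (a := x₀) (s := Ioo a b)).and hev).exists

theorem tendsto_intervalIntegral_pow_succ_mul_div {a b x₀ : ℝ} {f g : ℝ → ℝ} (hab : a < b)
    (hf : ContinuousOn f (Icc a b)) (hg : ContinuousOn g (Icc a b))
    (hf0 : ∀ y ∈ Ioo a b, 0 ≤ f y) (hx₀ : x₀ ∈ Icc a b) (hfx₀ : ∀ y ∈ Ioo a b, f y ≤ f x₀)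
    (hfx₀_pos : 0 < f x₀) (hg0 : ∀ y ∈ Ioo a b, 0 < g y) :
    Tendsto (fun N : ℕ => (∫ y in a..b, f y ^ (N + 1) * g y) / ∫ y in a..b, f y ^ N * g y)
      atTop (𝓝 (f x₀)) := by
  set ν := (volume.restrict (Ioo a b)).withDensity fun y => ENNReal.ofReal (g y)
  have : IsFiniteMeasure ν :=
    isFiniteMeasure_withDensity_ofReal (hg.integrableOn_Icc.mono_set Ioo_subset_Icc_self).2
  have hgm : AEMeasurable (fun y => ENNReal.ofReal (g y)) (volume.restrict (Ioo a b)) :=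
    ((hg.mono Ioo_subset_Icc_self).aemeasurable measurableSet_Ioo).ennreal_ofReal
  have hae {p : ℝ → Prop} (h : ∀ y ∈ Ioo a b, p y) : ∀ᵐ y ∂ν, p y :=
    (withDensity_absolutelyContinuous _ _).ae_le (ae_restrict_of_forall_mem measurableSet_Ioo h)
  have hmom (N : ℕ) : ∫ y in a..b, f y ^ N * g y = ∫ y, f y ^ N ∂ν := by
    rw [integral_withDensity_eq_integral_toReal_smul₀ hgm
        (.of_forall fun _ => ENNReal.ofReal_lt_top), intervalIntegral.integral_of_le hab.le,
      integral_Ioc_eq_integral_Ioo]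
    refine setIntegral_congr_fun measurableSet_Ioo fun y hy => ?_
    simp [ENNReal.toReal_ofReal (hg0 y hy).le, mul_comm]
  simp_rw [hmom]
  refine tendsto_integral_pow_succ_div_integral_pow
    (((hf.mono Ioo_subset_Icc_self).aestronglyMeasurable measurableSet_Ioo).mono_ac
      (withDensity_absolutelyContinuous _ _)) (hae hf0) (hae hfx₀) hfx₀_pos fun t ht => ?_
  obtain ⟨y, hy, hty⟩ := exists_mem_Ioo_lt_of_continuousOn hab hf hx₀ ht
  have hU : IsOpen (Ioo a b ∩ f ⁻¹' Ioi t) :=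
    (hf.mono Ioo_subset_Icc_self).isOpen_inter_preimage isOpen_Ioo isOpen_Ioi
  rw [Ne, withDensity_apply_eq_zero' hgm, Measure.restrict_apply' measurableSet_Ioo]
  refine (hU.measure_pos volume ⟨y, hy, hty⟩).ne' ∘ measure_mono_null fun z hz => ?_
  exact ⟨⟨(ENNReal.ofReal_pos.2 (hg0 z hz.1)).ne', hz.2⟩, hz.1⟩

theorem stmt18_general (r ε : ℝ) (hr : r ∈ Set.Ioo (0 : ℝ) 1) (hε : 0 < ε)
    (g h : ℝ → ℝ)
    (hgc : ContinuousOn g (Set.Icc (-1 : ℝ) 1))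
    (hgh : ∀ y ∈ Set.Icc (-1 : ℝ) 1, g y = Real.sqrt (1 - y ^ 2) * h y)
    (hhl : ∀ y ∈ Set.Icc (-1 : ℝ) 1, ε ≤ h y) :
    Tendsto (fun N : ℕ =>
        (∫ y in (-1 : ℝ)..1, (1 + r + 2 * Real.sqrt r * y) ^ (N - 1) * g y)
          / ∫ y in (-1 : ℝ)..1, (1 + r + 2 * Real.sqrt r * y) ^ N * g y)
      atTop (nhds (1 / (1 + Real.sqrt r) ^ 2)) := by
  set s := Real.sqrt r
  have hs : 0 < s := Real.sqrt_pos.2 hr.1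
  have hsr : s ^ 2 = r := Real.sq_sqrt hr.1.le
  have hmax : 1 + r + 2 * s * 1 = (1 + s) ^ 2 := by rw [← hsr]; ring
  have hg0 (y : ℝ) (hy : y ∈ Ioo (-1) 1) : 0 < g y := by
    rw [hgh y (Ioo_subset_Icc_self hy)]
    exact mul_pos (Real.sqrt_pos.2 (by nlinarith [hy.1, hy.2]))
      (hε.trans_le (hhl y (Ioo_subset_Icc_self hy)))
  have hratio := tendsto_intervalIntegral_pow_succ_mul_div (f := fun y => 1 + r + 2 * s * y)
    (by norm_num) (by fun_prop) hgc (fun y hy => by nlinarith [hy.1, sq_nonneg (1 - s)])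
    (right_mem_Icc.2 (by norm_num)) (fun y hy => by nlinarith [hy.2]) (by rw [hmax]; positivity)
    hg0
  rw [hmax] at hratio
  rw [← tendsto_add_atTop_iff_nat 1, one_div]
  simpa only [add_tsub_cancel_right, inv_div] using hratio.inv₀ (by positivity)

/-- Ratio of consecutive moments in the maximal current phase converges to
1/(1+√r)². -/
theorem stmt18 (r ε : ℝ) (hr : r ∈ Set.Ioo (0 : ℝ) 1) (hε : 0 < ε)
    (g h : ℝ → ℝ)
    (hgc : ContinuousOn g (Set.Icc (-1 : ℝ) 1))
    (hhc : ContinuousOn h (Set.Icc (-1 : ℝ) 1))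
    (hgh : ∀ y ∈ Set.Icc (-1 : ℝ) 1, g y = Real.sqrt (1 - y ^ 2) * h y)
    (hhl : ∀ y ∈ Set.Icc (-1 : ℝ) 1, ε ≤ h y) :
    Tendsto (fun N : ℕ =>
        (∫ y in (-1 : ℝ)..1, (1 + r + 2 * Real.sqrt r * y) ^ (N - 1) * g y)
          / ∫ y in (-1 : ℝ)..1, (1 + r + 2 * Real.sqrt r * y) ^ N * g y)
      atTop (nhds (1 / (1 + Real.sqrt r) ^ 2)) :=
  stmt18_general r ε hr hε g h hgc hgh hhl
end
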